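/- Fix integers n, m ≥ 1 and set d = n+m+1. Then Λ(n,m) is an admissible d-colored multigraph: its underlying multigraph is loopless and connected, and for each color k ∈ {1,…,d} the edges of color k form a perfect matching of the vertex set (every vertex is incident to exactly one edge of color k). -/

import Mathlib

noncomputable section
attribute [local instance] Classical.propDecidable

/-- A finite multigraph with colored edges, given by a finite vertex set `Vs` inside an
ambient type `V` and a finite set of edges; an edge is a triple `(u, v, i)` recording its
two endpoints (in an arbitrary chosen orientation) and its color `i`.  Since every vertex
of an admissible colored multigraph is incident to at most one edge of each color, this
faithfully represents the multigraphs occurring in crystallization theory. -/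
structure MG (V : Type) where
  Vs : Finset V
  Es : Finset (V × V × ℕ)

namespace MG

variable {V : Type}

/-- The edge `e` joins the vertices `u` and `v`, i.e. `φ(e) = {u, v}`. -/
def joins (e : V × V × ℕ) (u v : V) : Prop :=
  (e.1 = u ∧ e.2.1 = v) ∨ (e.1 = v ∧ e.2.1 = u)

/-- The vertex `v` is an endpoint of the edge `e`. -/
def incid (e : V × V × ℕ) (v : V) : Prop := e.1 = v ∨ e.2.1 = v

/-- Adjacency in the spanning subgraph `G_S` of edges whose color lies in `S`. -/
def Adj (G : MG V) (S : Finset ℕ) (u v : V) : Prop :=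
  u ∈ G.Vs ∧ v ∈ G.Vs ∧ ∃ e ∈ G.Es, e.2.2 ∈ S ∧ joins e u v

/-- `G.Conn S u v`: `u` and `v` are connected by a path of edges of `G_S`.
Two vertices are *disconnected* on `G_S` if `¬ G.Conn S u v`. -/
def Conn (G : MG V) (S : Finset ℕ) : V → V → Prop :=
  Relation.ReflTransGen (G.Adj S)

/-- Well-formedness of a multigraph with colors in `K`: endpoints of edges are vertices,
there are no loops, and all colors lie in `K`. -/
def WF (K : Finset ℕ) (G : MG V) : Prop :=
  ∀ e ∈ G.Es, e.1 ∈ G.Vs ∧ e.2.1 ∈ G.Vs ∧ e.1 ≠ e.2.1 ∧ e.2.2 ∈ K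

/-- Admissibility of a `K`-colored multigraph: it is (loopless and) connected, and for
each color `i ∈ K` the edges of color `i` form a perfect matching of the vertex set. -/
def Admissible (K : Finset ℕ) (G : MG V) : Prop :=
  WF K G ∧ (∀ u ∈ G.Vs, ∀ v ∈ G.Vs, G.Conn K u v) ∧
    (∀ i ∈ K, ∀ v ∈ G.Vs, ∃! e, e ∈ G.Es ∧ e.2.2 = i ∧ incid e v)

/-- The connected component of `G_S` containing the vertex `v`. -/
def comp (G : MG V) (S : Finset ℕ) (v : V) : Set V := {w | G.Conn S v w}

/-- The poset `P_Λ` associated to a `K`-colored multigraph: its elements are pairs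
`(H, S)` of a subset `S ⊆ K` and a connected component `H` of `G_S`. -/
def PElem (K : Finset ℕ) (G : MG V) : Type :=
  {p : Set V × Finset ℕ // p.2 ⊆ K ∧ ∃ v ∈ G.Vs, p.1 = G.comp p.2 v}

/-- The order of `P_Λ`: `(H, S) ≤ (H', S')` iff `S' ⊆ S` and `H' ⊆ H`
(so that `(G, K)` is the least element). -/
instance (K : Finset ℕ) (G : MG V) : PartialOrder (PElem K G) where
  le p q := q.1.2 ⊆ p.1.2 ∧ q.1.1 ⊆ p.1.1
  le_refl p := ⟨subset_rfl, subset_rfl⟩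
  le_trans p q r h₁ h₂ := ⟨h₂.1.trans h₁.1, h₂.2.trans h₁.2⟩
  le_antisymm p q h₁ h₂ :=
    Subtype.ext (Prod.ext (subset_antisymm h₂.2 h₁.2) (subset_antisymm h₂.1 h₁.1))

/-- The subgraph of `G` with vertex set `H` and the edges of `G_S` joining vertices
of `H`, viewed as an `S`-colored multigraph. -/
def restrict (G : MG V) (S : Finset ℕ) (H : Set V) : MG V where
  Vs := G.Vs.filter (· ∈ H)
  Es := G.Es.filter fun e => e.2.2 ∈ S ∧ e.1 ∈ H ∧ e.2.1 ∈ H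

/-- The cancelling `del_{x,y} Λ` of the pair of vertices `x, y` in a `K`-colored
multigraph: delete `x`, `y` and all edges incident to them, and for every color
`i ∈ K` not realized on an edge joining `x` and `y`, add a new edge of color `i`
joining the color-`i` neighbour of `x` to the color-`i` neighbour of `y`. -/
def del (K : Finset ℕ) (G : MG V) (x y : V) : MG V :=
  { Vs := G.Vs \ {x, y}
    Es := (G.Es.filter fun e => ¬ incid e x ∧ ¬ incid e y) ∪
      ((G.Vs ×ˢ G.Vs ×ˢ
          (K \ (K.filter fun i => ∃ e ∈ G.Es, e.2.2 = i ∧ joins e x y))).filter fun q =>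
        q.1 ≠ x ∧ q.1 ≠ y ∧ q.2.1 ≠ x ∧ q.2.1 ≠ y ∧
        (∃ e ∈ G.Es, e.2.2 = q.2.2 ∧ joins e x q.1) ∧
        (∃ e ∈ G.Es, e.2.2 = q.2.2 ∧ joins e y q.2.1)) }

end MG

/-- The four symbols `A`, `B`, `C`, `D` labelling the vertices of the colored graph
`Λ(n,m)`: a vertex of `Λ(n,m)` is a pair `(X, S)` (written `X(S)` in the paper) of a
symbol `X ∈ {A,B,C,D}` and an `n`-element subset `S ⊆ {1,…,n+m}`. -/
inductive Lbl | A | B | C | D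
deriving DecidableEq

/-- The `n`-element subsets of `{1,…,n+m}`. -/
def nsubs (n m : ℕ) : Finset (Finset ℕ) :=
  (Finset.Icc 1 (n+m)).powerset.filter fun S => S.card = n

/-- The vertex set of `Λ(n,m)`: all pairs `X(S)` with `X ∈ {A,B,C,D}` and `S` an
`n`-element subset of `{1,…,n+m}`. -/
def VsNM (n m : ℕ) : Finset (Lbl × Finset ℕ) :=
  ({Lbl.A, Lbl.B, Lbl.C, Lbl.D} : Finset Lbl) ×ˢ nsubs n m

/-- The set `{k-1, k}`, interpreted as `{1}` when `k = 1` and as `{N}` when `k = N+1`. -/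
def pairset (N k : ℕ) : Finset ℕ :=
  if k = 1 then {1} else if k = N + 1 then {N} else {k - 1, k}

/-- The description of the edges of `Λ(n,m)`: an edge of color `k` joins
(E1) `A(S)` and `B(S)` (or `C(S)` and `D(S)`) when `{k-1,k} ∩ S = ∅`;
(E2) `A(S)` and `C(S)` (or `B(S)` and `D(S)`) when `{k-1,k} ⊆ S`;
(E3) `X(S)` and `X((S \ {k}) ∪ {k-1})` when `2 ≤ k ≤ n+m`, `k ∈ S`, `k-1 ∉ S`. -/
def EdgeSpec (n m : ℕ) (q : (Lbl × Finset ℕ) × (Lbl × Finset ℕ) × ℕ) : Prop :=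
  ((q.1.2 = q.2.1.2 ∧ pairset (n+m) q.2.2 ∩ q.1.2 = ∅ ∧
      ((q.1.1 = Lbl.A ∧ q.2.1.1 = Lbl.B) ∨ (q.1.1 = Lbl.C ∧ q.2.1.1 = Lbl.D))) ∨
   (q.1.2 = q.2.1.2 ∧ pairset (n+m) q.2.2 ⊆ q.1.2 ∧
      ((q.1.1 = Lbl.A ∧ q.2.1.1 = Lbl.C) ∨ (q.1.1 = Lbl.B ∧ q.2.1.1 = Lbl.D))) ∨
   (q.1.1 = q.2.1.1 ∧ 2 ≤ q.2.2 ∧ q.2.2 ≤ n+m ∧ q.2.2 ∈ q.1.2 ∧ q.2.2 - 1 ∉ q.1.2 ∧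
      q.2.1.2 = insert (q.2.2 - 1) (q.1.2.erase q.2.2)))

/-- The `(n+m+1)`-colored multigraph `Λ(n,m)` (with colors `{1,…,n+m+1}`). -/
def LamNM (n m : ℕ) : MG (Lbl × Finset ℕ) where
  Vs := VsNM n m
  Es := (VsNM n m ×ˢ VsNM n m ×ˢ Finset.Icc 1 (n+m+1)).filter (EdgeSpec n m)

/-- `S ∈ X_j`, i.e. `S ⊆ {j+1,…,n+m}` and `#S = n+1-j`, for `1 ≤ j ≤ n`. -/
def inXj (n m j : ℕ) (S : Finset ℕ) : Prop :=
  1 ≤ j ∧ j ≤ n ∧ S ⊆ Finset.Icc (j+1) (n+m) ∧ S.card = n + 1 - j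

/-- `S ∈ X = X_1 ∪ ⋯ ∪ X_n`. -/
def inX (n m : ℕ) (S : Finset ℕ) : Prop := ∃ j, inXj n m j S

/-- `X` as a finite set of finsets. -/
def Xset (n m : ℕ) : Finset (Finset ℕ) :=
  (Finset.Icc 1 (n+m)).powerset.filter (inX n m)

/-- For `S = {i_1 < ⋯ < i_{n+1-j}} ∈ X_j` (where `j = n+1-#S`) and `S' = S \ {i_1}`,
the pair `D(S) = D_j(S)` of vertices of `Λ(n,m)`:
`{A([j-1] ∪ S), A([j] ∪ S')}` if `j` is odd and `i_1 = j+1`;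
`{A([j-1] ∪ S), B([i_1-j-1, i_1-2] ∪ S')}` if `j` is odd and `i_1 > j+1`;
`{B([i_1-j, i_1-2] ∪ S), B([i_1-j, i_1-1] ∪ S')}` if `j` is even. -/
def DS (n m : ℕ) (S : Finset ℕ) : (Lbl × Finset ℕ) × (Lbl × Finset ℕ) :=
  let j := n + 1 - S.card
  let i1 := if h : S.Nonempty then S.min' h else 0
  let S' := S.erase i1
  if Odd j then
    if i1 = j + 1 then
      ((Lbl.A, Finset.Icc 1 (j-1) ∪ S), (Lbl.A, Finset.Icc 1 j ∪ S'))
    else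
      ((Lbl.A, Finset.Icc 1 (j-1) ∪ S), (Lbl.B, Finset.Icc (i1-j-1) (i1-2) ∪ S'))
  else
    ((Lbl.B, Finset.Icc (i1-j) (i1-2) ∪ S), (Lbl.B, Finset.Icc (i1-j) (i1-1) ∪ S'))

/-- The binary encoding `∑_{i ∈ S} 2^i` of a finite set of naturals. -/
def binval (S : Finset ℕ) : ℕ := ∑ i ∈ S, 2 ^ i

/-- A numerical key linearizing the total order `≻` on `X`: for `S, T ∈ X`,
`D(T) ≻ D(S)` (i.e. `D(T)` comes earlier) if and only if `key T < key S`.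
(The primary comparison is by `j = n+1-#S` ascending; for equal `j`, `T >_rlex S`
holds exactly when the binary encoding of `T` is smaller than that of `S`.) -/
def key (n m : ℕ) (S : Finset ℕ) : ℕ :=
  (n + 1 - S.card) * 2 ^ (n + m + 2) + binval S

/-- `SX n m k` is the set `S ∈ X` whose pair `D(S)` is the `k`-th element `D_k` in the
total order `D_1 ≻ D_2 ≻ ⋯` (obtained by sorting the keys and decoding the `k`-th one). -/
def SX (n m k : ℕ) : Finset ℕ :=
  let kk := (((Xset n m).image (key n m)).sort (· ≤ ·)).getD (k-1) 0
  (Finset.Icc 1 (n+m)).filter fun i => Nat.testBit (kk % 2 ^ (n + m + 2)) i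

/-- The sequence of multigraphs `Λ^(1), Λ^(2), …` : `Lam0 n m (k-1) = Λ^(k)`, where
`Λ^(1) = Λ(n,m)` and `Λ^(k+1) = del_{D_k} Λ^(k)`. -/
def Lam0 (n m : ℕ) : ℕ → MG (Lbl × Finset ℕ)
  | 0 => LamNM n m
  | k + 1 => MG.del (Finset.Icc 1 (n+m+1)) (Lam0 n m k)
      (DS n m (SX n m (k+1))).1 (DS n m (SX n m (k+1))).2

/-- The number of elements `T ∈ X` with `D(T) ≻ D(S)`, i.e. cancelled before `D(S)`;
if `D(S) = D_k` then `posIdx n m S = k - 1`. -/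
def posIdx (n m : ℕ) (S : Finset ℕ) : ℕ :=
  ((Xset n m).filter fun T => key n m T < key n m S).card

/-- `Λ(S) = Λ^(k)` where `D_k = D(S)`: the multigraph to which the cancelling of the
pair `D(S)` is applied. -/
def LamS (n m : ℕ) (S : Finset ℕ) : MG (Lbl × Finset ℕ) := Lam0 n m (posIdx n m S)

/-- `Λ'(S) = Λ^(k+1) = del_{D(S)} Λ(S)` where `D_k = D(S)`. -/
def LamS' (n m : ℕ) (S : Finset ℕ) : MG (Lbl × Finset ℕ) := Lam0 n m (posIdx n m S + 1)

/-- Two vertices `u`, `v` are directly connected on `G` by the colors `H` if for every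
`i ∈ H` there is an edge of `G` of color `i` whose vertex set is `{u, v}`. -/
def dirConn {V : Type} (G : MG V) (u v : V) (H : Finset ℕ) : Prop :=
  ∀ i ∈ H, ∃ e ∈ G.Es, e.2.2 = i ∧ MG.joins e u v

/-- `color(S) = {l ∈ S : l-1 ∉ S}`. -/
def colorOf (S : Finset ℕ) : Finset ℕ := S.filter fun l => l - 1 ∉ S

/-!
For a color `k` and a vertex `X(S)`, the set `{k-1, k}` is either disjoint from `S`,
contained in `S`, or meets it in exactly one point; correspondingly the color-`k` edge at
`X(S)` is of type (E1), (E2) or (E3), and in each case there is exactly one such edge.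

An (E3) edge moves some `k ∈ S` with `k - 1 ∉ S` down to `k - 1`, lowering `∑ S`; such a `k`
exists unless `S = {1,…,n}`, so every `X(S)` is connected to `X({1,…,n})`. There the color
`1` joins `A` to `C` and the color `n+m+1` joins `A` to `B` and `C` to `D`.
-/

open Finset

namespace MG

variable {V : Type} {G : MG V} {K : Finset ℕ} {u v : V}

theorem Adj.symm (h : G.Adj K u v) : G.Adj K v u :=
  let ⟨hu, hv, e, he, hK, hj⟩ := h
  ⟨hv, hu, e, he, hK, hj.symm⟩

theorem Conn.symm (h : G.Conn K u v) : G.Conn K v u :=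
  have : Std.Symm (G.Adj K) := ⟨fun _ _ => Adj.symm⟩
  Relation.ReflTransGen.stdSymm.symm u v h

end MG

theorem Finset.insert_erase_insert_erase {α : Type*} [DecidableEq α] {s : Finset α} {a b : α}
    (ha : a ∈ s) (hb : b ∉ s) : insert a ((insert b (s.erase a)).erase b) = s := by
  rw [erase_insert fun h => hb (mem_of_mem_erase h), insert_erase ha]

theorem Finset.mem_of_le_of_pred_mem {S : Finset ℕ} (hpred : ∀ k ∈ S, 2 ≤ k → k - 1 ∈ S)
    {j k : ℕ} (hj : 1 ≤ j) (hjk : j ≤ k) (hk : k ∈ S) : j ∈ S := by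
  induction k, hjk using Nat.le_induction with
  | base => exact hk
  | succ k hjk ih => exact ih (by simpa using hpred (k + 1) hk (by omega))

theorem mem_nsubs {n m : ℕ} {S : Finset ℕ} :
    S ∈ nsubs n m ↔ S ⊆ Icc 1 (n + m) ∧ S.card = n := by
  simp [nsubs]

theorem Icc_one_mem_nsubs (n m : ℕ) : Icc 1 n ∈ nsubs n m :=
  mem_nsubs.mpr ⟨Icc_subset_Icc_right (by omega), by simp⟩

theorem insert_erase_mem_nsubs {n m a b : ℕ} {S : Finset ℕ} (hS : S ∈ nsubs n m)
    (ha : a ∈ S) (hb : b ∈ Icc 1 (n + m)) (hbS : b ∉ S) :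
    insert b (S.erase a) ∈ nsubs n m := by
  obtain ⟨hsub, hcard⟩ := mem_nsubs.mp hS
  refine mem_nsubs.mpr ⟨insert_subset hb ((erase_subset a S).trans hsub), ?_⟩
  rw [card_insert_of_notMem fun h => hbS (mem_of_mem_erase h), card_erase_of_mem ha, hcard,
    Nat.sub_add_cancel (hcard ▸ card_pos.mpr ⟨a, ha⟩)]

theorem exists_shift_of_ne_Icc {n m : ℕ} {S : Finset ℕ} (hS : S ∈ nsubs n m)
    (hne : S ≠ Icc 1 n) : ∃ k, 2 ≤ k ∧ k ≤ n + m ∧ k ∈ S ∧ k - 1 ∉ S := by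
  obtain ⟨hsub, hcard⟩ := mem_nsubs.mp hS
  -- Otherwise `S` is closed under `k ↦ k - 1`, so an element `j ≤ n` missing from `S`
  -- bounds `S` by `j - 1`, too small for `n` elements.
  by_contra! hpred
  obtain ⟨j, hj, hjS⟩ : ∃ j ∈ Icc 1 n, j ∉ S := by
    by_contra! h
    exact hne (eq_of_subset_of_card_le h (by simp [hcard])).symm
  have hbelow : S ⊆ Icc 1 (j - 1) := fun k hk => by
    have hk' := mem_Icc.mp (hsub hk)
    have hjk : ¬ j ≤ k := fun hjk => hjS <|
      mem_of_le_of_pred_mem (fun l hl h2 => hpred l h2 (mem_Icc.mp (hsub hl)).2 hl)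
        (mem_Icc.mp hj).1 hjk hk
    exact mem_Icc.mpr ⟨hk'.1, by omega⟩
  have := card_le_card hbelow
  simp only [Nat.card_Icc, mem_Icc] at this hj
  omega

theorem sum_insert_pred_erase {S : Finset ℕ} {k : ℕ} (hk : k ∈ S) (hk1 : k - 1 ∉ S) :
    ∑ i ∈ insert (k - 1) (S.erase k), i + 1 = ∑ i ∈ S, i := by
  have hk0 : k ≠ 0 := by rintro rfl; exact hk1 hk
  rw [sum_insert fun h => hk1 (mem_of_mem_erase h), ← sum_erase_add S _ hk]
  omega

theorem pairset_one (N : ℕ) : pairset N 1 = {1} := by simp [pairset]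

theorem pairset_succ_self {N : ℕ} (hN : N ≠ 0) : pairset N (N + 1) = {N} := by
  rw [pairset, if_neg (by omega), if_pos rfl]

theorem pairset_of_two_le {N k : ℕ} (h2 : 2 ≤ k) (hk : k ≤ N) : pairset N k = {k - 1, k} := by
  rw [pairset, if_neg (by omega), if_neg (by omega)]

theorem pairset_nonempty (N k : ℕ) : (pairset N k).Nonempty := by
  unfold pairset; split_ifs <;> simp

theorem pairset_mixed_iff {N k : ℕ} {S : Finset ℕ} (hk : k ∈ Icc 1 (N + 1)) :
    (pairset N k ∩ S ≠ ∅ ∧ ¬ pairset N k ⊆ S) ↔ 2 ≤ k ∧ k ≤ N ∧ (k ∈ S ↔ k - 1 ∉ S) := by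
  rw [mem_Icc] at hk
  rcases (by omega : k = 1 ∨ (k = N + 1 ∧ N ≠ 0) ∨ (2 ≤ k ∧ k ≤ N)) with
    rfl | ⟨rfl, hN⟩ | ⟨h2, hkN⟩
  · rw [pairset_one]
    by_cases h : 1 ∈ S <;> simp [h]
  · rw [pairset_succ_self hN]
    by_cases h : N ∈ S <;> simp [h]
  · rw [pairset_of_two_le h2 hkN]
    by_cases h : k ∈ S <;> by_cases h' : k - 1 ∈ S <;> simp [h, h', insert_subset_iff, h2, hkN]

def labelsE1 : Lbl → Lbl × Lbl
  | .A | .B => (.A, .B)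
  | .C | .D => (.C, .D)

def labelsE2 : Lbl → Lbl × Lbl
  | .A | .C => (.A, .C)
  | .B | .D => (.B, .D)

theorem labelsE1_spec (X : Lbl) :
    ((labelsE1 X).1 = .A ∧ (labelsE1 X).2 = .B ∨ (labelsE1 X).1 = .C ∧ (labelsE1 X).2 = .D) ∧
      ((labelsE1 X).1 = X ∨ (labelsE1 X).2 = X) := by
  cases X <;> simp [labelsE1]

theorem labelsE2_spec (X : Lbl) :
    ((labelsE2 X).1 = .A ∧ (labelsE2 X).2 = .C ∨ (labelsE2 X).1 = .B ∧ (labelsE2 X).2 = .D) ∧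
      ((labelsE2 X).1 = X ∨ (labelsE2 X).2 = X) := by
  cases X <;> simp [labelsE2]

theorem labelsE1_eq {X X₁ X₂ : Lbl} (h : X₁ = .A ∧ X₂ = .B ∨ X₁ = .C ∧ X₂ = .D)
    (hX : X₁ = X ∨ X₂ = X) : labelsE1 X = (X₁, X₂) := by
  rcases h with ⟨rfl, rfl⟩ | ⟨rfl, rfl⟩ <;> rcases hX with rfl | rfl <;> rfl

theorem labelsE2_eq {X X₁ X₂ : Lbl} (h : X₁ = .A ∧ X₂ = .C ∨ X₁ = .B ∧ X₂ = .D)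
    (hX : X₁ = X ∨ X₂ = X) : labelsE2 X = (X₁, X₂) := by
  rcases h with ⟨rfl, rfl⟩ | ⟨rfl, rfl⟩ <;> rcases hX with rfl | rfl <;> rfl

namespace LamNM

variable {n m : ℕ}

theorem mem_VsNM {v : Lbl × Finset ℕ} : v ∈ VsNM n m ↔ v.2 ∈ nsubs n m := by
  obtain ⟨X, S⟩ := v
  cases X <;> simp [VsNM]

theorem mem_Es {e : (Lbl × Finset ℕ) × (Lbl × Finset ℕ) × ℕ} :
    e ∈ (LamNM n m).Es ↔
      e.1 ∈ VsNM n m ∧ e.2.1 ∈ VsNM n m ∧ e.2.2 ∈ Icc 1 (n + m + 1) ∧ EdgeSpec n m e := by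
  simp only [LamNM, mem_filter, mem_product, and_assoc]

theorem fst_ne_snd_of_mem_Es {e : (Lbl × Finset ℕ) × (Lbl × Finset ℕ) × ℕ}
    (he : e ∈ (LamNM n m).Es) : e.1 ≠ e.2.1 := by
  obtain ⟨⟨X₁, S₁⟩, ⟨X₂, S₂⟩, k⟩ := e
  obtain ⟨-, -, -, hspec⟩ := mem_Es.mp he
  simp only [EdgeSpec] at hspec
  rcases hspec with ⟨-, -, ⟨rfl, rfl⟩ | ⟨rfl, rfl⟩⟩ | ⟨-, -, ⟨rfl, rfl⟩ | ⟨rfl, rfl⟩⟩ |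
    ⟨-, h2, -, hkS, -, rfl⟩ <;> try simp
  intro _ h
  rw [h, mem_insert, mem_erase] at hkS
  omega

theorem wf : MG.WF (Icc 1 (n + m + 1)) (LamNM n m) := fun _ he =>
  have ⟨h₁, h₂, hk, _⟩ := mem_Es.mp he
  ⟨h₁, h₂, fst_ne_snd_of_mem_Es he, hk⟩

-- Edges are stored in the orientation prescribed by `EdgeSpec`, so `v` is the first or the
-- second endpoint of its edge according to that orientation.
def matchEdge (N k : ℕ) (v : Lbl × Finset ℕ) : (Lbl × Finset ℕ) × (Lbl × Finset ℕ) × ℕ :=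
  if pairset N k ∩ v.2 = ∅ then (((labelsE1 v.1).1, v.2), ((labelsE1 v.1).2, v.2), k)
  else if pairset N k ⊆ v.2 then (((labelsE2 v.1).1, v.2), ((labelsE2 v.1).2, v.2), k)
  else if k ∈ v.2 then (v, (v.1, insert (k - 1) (v.2.erase k)), k)
  else ((v.1, insert k (v.2.erase (k - 1))), v, k)

theorem matchEdge_spec {k : ℕ} {v : Lbl × Finset ℕ} (hk : k ∈ Icc 1 (n + m + 1))
    (hv : v ∈ VsNM n m) :
    matchEdge (n + m) k v ∈ (LamNM n m).Es ∧ (matchEdge (n + m) k v).2.2 = k ∧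
      MG.incid (matchEdge (n + m) k v) v := by
  obtain ⟨X, S⟩ := v
  have hS := mem_VsNM.mp hv
  unfold matchEdge
  split_ifs with hE1 hE2 hkS
  · obtain ⟨hlbl, hX⟩ := labelsE1_spec X
    exact ⟨mem_Es.mpr ⟨mem_VsNM.mpr hS, mem_VsNM.mpr hS, hk, Or.inl ⟨rfl, hE1, hlbl⟩⟩, rfl,
      hX.imp (congrArg (·, S)) (congrArg (·, S))⟩
  · obtain ⟨hlbl, hX⟩ := labelsE2_spec X
    exact ⟨mem_Es.mpr ⟨mem_VsNM.mpr hS, mem_VsNM.mpr hS, hk, Or.inr (Or.inl ⟨rfl, hE2, hlbl⟩)⟩,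
      rfl, hX.imp (congrArg (·, S)) (congrArg (·, S))⟩
  all_goals
    obtain ⟨h2, hkN, hiff⟩ := (pairset_mixed_iff hk).mp ⟨hE1, hE2⟩
    have hkN' : k - 1 ∈ Icc 1 (n + m) ∧ k ∈ Icc 1 (n + m) := by simp only [mem_Icc]; omega
  · have hk1S := hiff.mp hkS
    exact ⟨mem_Es.mpr ⟨hv, mem_VsNM.mpr (insert_erase_mem_nsubs hS hkS hkN'.1 hk1S), hk,
      Or.inr (Or.inr ⟨rfl, h2, hkN, hkS, hk1S, rfl⟩)⟩, rfl, Or.inl rfl⟩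
  · have hk1S : k - 1 ∈ S := not_not.mp (mt hiff.mpr hkS)
    refine ⟨mem_Es.mpr ⟨mem_VsNM.mpr (insert_erase_mem_nsubs hS hk1S hkN'.2 hkS), hv, hk,
      Or.inr (Or.inr ⟨rfl, h2, hkN, mem_insert_self _ _, ?_,
        (insert_erase_insert_erase hk1S hkS).symm⟩)⟩, rfl, Or.inr rfl⟩
    simp only [mem_insert, mem_erase]
    omega

theorem eq_matchEdge {k : ℕ} {v : Lbl × Finset ℕ} {e : (Lbl × Finset ℕ) × (Lbl × Finset ℕ) × ℕ}
    (he : e ∈ (LamNM n m).Es) (hc : e.2.2 = k) (hv : MG.incid e v) :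
    e = matchEdge (n + m) k v := by
  obtain ⟨⟨X₁, S₁⟩, ⟨X₂, S₂⟩, k'⟩ := e
  obtain rfl : k = k' := hc.symm
  obtain ⟨-, -, hk, hspec⟩ := mem_Es.mp he
  obtain ⟨X, S⟩ := v
  simp only [EdgeSpec] at hspec hk
  rcases hspec with ⟨rfl, hE1, hlbl⟩ | ⟨rfl, hE2, hlbl⟩ | ⟨rfl, h2, hkN, hkS, hk1S, rfl⟩
  · have hX : X₁ = X ∨ X₂ = X := hv.imp (congrArg Prod.fst) (congrArg Prod.fst)
    obtain rfl : S₁ = S := by rcases hv with h | h <;> exact congrArg Prod.snd h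
    simp only [matchEdge, if_pos hE1, labelsE1_eq hlbl hX]
  · have hX : X₁ = X ∨ X₂ = X := hv.imp (congrArg Prod.fst) (congrArg Prod.fst)
    obtain rfl : S₁ = S := by rcases hv with h | h <;> exact congrArg Prod.snd h
    have hE1 : pairset (n + m) k ∩ S₁ ≠ ∅ :=
      (inter_eq_left.mpr hE2).symm ▸ (pairset_nonempty _ _).ne_empty
    simp only [matchEdge, if_neg hE1, if_pos hE2, labelsE2_eq hlbl hX]
  · rcases hv with hv | hv <;> cases hv
    · have ⟨hE1, hE2⟩ := (pairset_mixed_iff hk).mpr ⟨h2, hkN, iff_of_true hkS hk1S⟩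
      simp only [matchEdge, if_neg hE1, if_neg hE2, if_pos hkS]
    · have hkS' : k ∉ insert (k - 1) (S₁.erase k) := by
        simp only [mem_insert, mem_erase]
        omega
      have ⟨hE1, hE2⟩ := (pairset_mixed_iff hk).mpr
        ⟨h2, hkN, iff_of_false hkS' (not_not.mpr (mem_insert_self _ _))⟩
      simp only [matchEdge, if_neg hE1, if_neg hE2, if_neg hkS',
        insert_erase_insert_erase hkS hk1S]

theorem existsUnique_edge_of_color {k : ℕ} (hk : k ∈ Icc 1 (n + m + 1))
    {v : Lbl × Finset ℕ} (hv : v ∈ VsNM n m) :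
    ∃! e, e ∈ (LamNM n m).Es ∧ e.2.2 = k ∧ MG.incid e v :=
  ⟨matchEdge (n + m) k v, matchEdge_spec hk hv,
    fun _ ⟨he, hc, hi⟩ => eq_matchEdge he hc hi⟩

theorem adj_of_edgeSpec {u v : Lbl × Finset ℕ} {k : ℕ} (hu : u ∈ VsNM n m) (hv : v ∈ VsNM n m)
    (hk : k ∈ Icc 1 (n + m + 1)) (h : EdgeSpec n m (u, v, k)) :
    (LamNM n m).Adj (Icc 1 (n + m + 1)) u v :=
  ⟨hu, hv, _, mem_Es.mpr ⟨hu, hv, hk, h⟩, hk, Or.inl ⟨rfl, rfl⟩⟩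

theorem conn_Icc_one (X : Lbl) {S : Finset ℕ} (hS : S ∈ nsubs n m) :
    (LamNM n m).Conn (Icc 1 (n + m + 1)) (X, S) (X, Icc 1 n) := by
  by_cases hS₀ : S = Icc 1 n
  · exact hS₀ ▸ .refl
  obtain ⟨k, h2, hkN, hkS, hk1S⟩ := exists_shift_of_ne_Icc hS hS₀
  have hS' := insert_erase_mem_nsubs hS hkS (by simp only [mem_Icc]; omega) hk1S
  have hsum := sum_insert_pred_erase hkS hk1S
  have hadj : (LamNM n m).Adj (Icc 1 (n + m + 1)) (X, S) (X, insert (k - 1) (S.erase k)) :=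
    adj_of_edgeSpec (mem_VsNM.mpr hS) (mem_VsNM.mpr hS') (by simp only [mem_Icc]; omega)
      (Or.inr (Or.inr ⟨rfl, h2, hkN, hkS, hk1S, rfl⟩))
  exact .head hadj (conn_Icc_one X hS')
termination_by ∑ i ∈ S, i
decreasing_by omega

theorem conn_A_Icc_one (hn : 1 ≤ n) (hm : 1 ≤ m) (X : Lbl) :
    (LamNM n m).Conn (Icc 1 (n + m + 1)) (.A, Icc 1 n) (X, Icc 1 n) := by
  have hV (Y : Lbl) : (Y, Icc 1 n) ∈ VsNM n m := mem_VsNM.mpr (Icc_one_mem_nsubs n m)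
  have hE1 : pairset (n + m) (n + m + 1) ∩ Icc 1 n = ∅ := by
    rw [pairset_succ_self (by omega), singleton_inter_of_notMem]
    simp only [mem_Icc]
    omega
  have hE2 : pairset (n + m) 1 ⊆ Icc 1 n := by
    rw [pairset_one, singleton_subset_iff, mem_Icc]
    omega
  have hd : n + m + 1 ∈ Icc 1 (n + m + 1) := by simp
  have h1 : 1 ∈ Icc 1 (n + m + 1) := by simp
  have hAB := adj_of_edgeSpec (hV .A) (hV .B) hd (Or.inl ⟨rfl, hE1, Or.inl ⟨rfl, rfl⟩⟩)
  have hCD := adj_of_edgeSpec (hV .C) (hV .D) hd (Or.inl ⟨rfl, hE1, Or.inr ⟨rfl, rfl⟩⟩)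
  have hAC := adj_of_edgeSpec (hV .A) (hV .C) h1 (Or.inr (Or.inl ⟨rfl, hE2, Or.inl ⟨rfl, rfl⟩⟩))
  cases X
  · exact .refl
  · exact .single hAB
  · exact .single hAC
  · exact .tail (.single hAC) hCD

theorem conn (hn : 1 ≤ n) (hm : 1 ≤ m) {u v : Lbl × Finset ℕ} (hu : u ∈ VsNM n m)
    (hv : v ∈ VsNM n m) : (LamNM n m).Conn (Icc 1 (n + m + 1)) u v :=
  ((conn_Icc_one u.1 (mem_VsNM.mp hu)).trans (conn_A_Icc_one hn hm u.1).symm).trans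
    ((conn_A_Icc_one hn hm v.1).trans (conn_Icc_one v.1 (mem_VsNM.mp hv)).symm)

end LamNM

/-- For `n, m ≥ 1` and `d = n+m+1`, the multigraph `Λ(n,m)` is an admissible `d`-colored
multigraph: it is loopless (and well-formed) and connected, and for each color
`k ∈ {1,…,d}` the edges of color `k` form a perfect matching of the vertex set
(every vertex is incident to exactly one edge of color `k`). -/
theorem stmt19 (n m : ℕ) (hn : 1 ≤ n) (hm : 1 ≤ m) :
    MG.Admissible (Finset.Icc 1 (n+m+1)) (LamNM n m) :=
  ⟨LamNM.wf, fun _ hu _ hv => LamNM.conn hn hm hu hv,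
    fun _ hk _ hv => LamNM.existsUnique_edge_of_color hk hv⟩
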